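/- Let (A, C, B) be a recollement of abelian categories, let A be an object of A, and let 0 → i_*(A) → M → N → 0 be a short exact sequence in C. If the counit ε_N : j_! j^*(N) → N is a monomorphism, then applying i^* yields a short exact sequence 0 → i^* i_*(A) → i^*(M) → i^*(N) → 0 in A. -/

import Mathlib

open CategoryTheory CategoryTheory.Limits

universe v₁ v₂ v₃ u₁ u₂ u₃

/-- A recollement of abelian categories `(𝒜, 𝒞, ℬ)`, consisting of additive functors
`i_* : 𝒜 ⥤ 𝒞`, `i^*, i^! : 𝒞 ⥤ 𝒜`, `j^* : 𝒞 ⥤ ℬ`, `j_!, j_* : ℬ ⥤ 𝒞` with adjoint pairs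
`(i^*, i_*)`, `(i_*, i^!)`, `(j_!, j^*)`, `(j^*, j_*)`, with `i_*`, `j_!`, `j_*` fully faithful
and the essential image of `i_*` equal to the kernel of `j^*`. -/
structure Recollement (𝒜 : Type u₁) (𝒞 : Type u₂) (ℬ : Type u₃)
    [Category.{v₁} 𝒜] [Category.{v₂} 𝒞] [Category.{v₃} ℬ]
    [Abelian 𝒜] [Abelian 𝒞] [Abelian ℬ] where
  /-- the functor `i^* : 𝒞 ⥤ 𝒜` -/
  iStar : 𝒞 ⥤ 𝒜
  /-- the functor `i_* : 𝒜 ⥤ 𝒞` -/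
  iIns : 𝒜 ⥤ 𝒞
  /-- the functor `i^! : 𝒞 ⥤ 𝒜` -/
  iShriek : 𝒞 ⥤ 𝒜
  /-- the functor `j_! : ℬ ⥤ 𝒞` -/
  jShriek : ℬ ⥤ 𝒞
  /-- the functor `j^* : 𝒞 ⥤ ℬ` -/
  jStar : 𝒞 ⥤ ℬ
  /-- the functor `j_* : ℬ ⥤ 𝒞` -/
  jIns : ℬ ⥤ 𝒞
  iStar_additive : iStar.Additive
  iIns_additive : iIns.Additive
  iShriek_additive : iShriek.Additive
  jShriek_additive : jShriek.Additive
  jStar_additive : jStar.Additive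
  jIns_additive : jIns.Additive
  /-- the adjunction `i^* ⊣ i_*` -/
  adj₁ : iStar ⊣ iIns
  /-- the adjunction `i_* ⊣ i^!` -/
  adj₂ : iIns ⊣ iShriek
  /-- the adjunction `j_! ⊣ j^*` -/
  adj₃ : jShriek ⊣ jStar
  /-- the adjunction `j^* ⊣ j_*` -/
  adj₄ : jStar ⊣ jIns
  iIns_full : iIns.Full
  iIns_faithful : iIns.Faithful
  jShriek_full : jShriek.Full
  jShriek_faithful : jShriek.Faithful
  jIns_full : jIns.Full
  jIns_faithful : jIns.Faithful
  /-- `im i_* = ker j^*` -/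
  im_eq_ker : ∀ X : 𝒞, IsZero (jStar.obj X) ↔ ∃ A₀ : 𝒜, Nonempty (iIns.obj A₀ ≅ X)

variable {𝒜 : Type u₁} {𝒞 : Type u₂} {ℬ : Type u₃}
  [Category.{v₁} 𝒜] [Category.{v₂} 𝒞] [Category.{v₃} ℬ]
  [Abelian 𝒜] [Abelian 𝒞] [Abelian ℬ]

/-- `0 ⟶ X ⟶ Y ⟶ Z ⟶ 0` is a short exact sequence. -/
def IsSES {𝒟 : Type*} [Category 𝒟] [Abelian 𝒟] {X Y Z : 𝒟}
    (f : X ⟶ Y) (g : Y ⟶ Z) : Prop :=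
  ∃ w : f ≫ g = 0, (ShortComplex.mk f g w).ShortExact

/-!
For every `X` the sequence `j_! j^* X ⟶ X ⟶ i_* i^* X` of counit and unit is exact: the cokernel
of `ε_X` is killed by `j^*`, so it lies in the image of `i_*`, and every map from `X` into that image
factors through the unit. Since `j^* f = 0`, the map `j^* g` is an isomorphism, so
`ε_M ≫ g = j_! j^* g ≫ ε_N` is monic. Hence `i_* A` meets the kernel `im ε_M` of `η_M` trivially,
i.e. `f ≫ η_M = η_{i_* A} ≫ i_* i^* f` is monic, and so is `i^* f`. Right exactness of `i^*` does
the rest.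
-/

lemma mono_comp_of_exact_of_mono_comp {C : Type*} [Category C] [Abelian C] {X M N P Q : C}
    {f : X ⟶ M} {g : M ⟶ N} {e : P ⟶ M} {η : M ⟶ Q} [Mono f] [Mono (e ≫ g)]
    (hfg : f ≫ g = 0) (he : e ≫ η = 0) (hexact : (ShortComplex.mk e η he).Exact) :
    Mono (f ≫ η) := by
  refine Preadditive.mono_of_cancel_zero _ fun {K} k hk => ?_
  obtain ⟨K', π, _, y, hy⟩ :=
    hexact.exact_up_to_refinements (k ≫ f) (by simpa only [Category.assoc] using hk)
  have hy₀ : y = 0 := zero_of_comp_mono (e ≫ g) <| by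
    dsimp only at hy
    rw [← Category.assoc, ← hy, Category.assoc, Category.assoc, hfg, comp_zero, comp_zero]
  rw [hy₀, zero_comp, ← Category.assoc] at hy
  rw [← cancel_epi π, comp_zero]
  exact zero_of_comp_mono f hy

lemma CategoryTheory.Adjunction.mono_map_of_mono_comp_unit {C D : Type*} [Category C] [Category D]
    {L : C ⥤ D} {G : D ⥤ C} [G.Full] [G.Faithful] (adj : L ⊣ G) {A : D} {M : C}
    (x : G.obj A ⟶ M) [Mono (x ≫ adj.unit.app M)] : Mono (L.map x) := by
  have : IsIso (adj.unit.app (G.obj A)) := adj.isIso_unit_app_of_iso (Iso.refl _)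
  have : Mono (adj.unit.app (G.obj A) ≫ G.map (L.map x)) := by
    have h := adj.unit.naturality x
    dsimp only [Functor.id_map, Functor.comp_map] at h
    rw [← h]
    infer_instance
  exact G.mono_of_mono_map ((mono_comp_iff_of_isIso _ _).mp this)

attribute [local instance] Recollement.iStar_additive Recollement.jStar_additive
  Recollement.iIns_full Recollement.iIns_faithful

namespace Recollement

variable (R : Recollement 𝒜 𝒞 ℬ)

lemma isZero_jStar_obj_iIns_obj (A : 𝒜) : IsZero (R.jStar.obj (R.iIns.obj A)) :=
  (R.im_eq_ker _).mpr ⟨A, ⟨Iso.refl _⟩⟩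

lemma counit_app_comp_unit_app (X : 𝒞) : R.adj₃.counit.app X ≫ R.adj₁.unit.app X = 0 :=
  (R.adj₃.homEquiv _ _).injective ((R.isZero_jStar_obj_iIns_obj _).eq_of_tgt _ _)

lemma isZero_jStar_obj_cokernel_counit (X : 𝒞) :
    IsZero (R.jStar.obj (cokernel (R.adj₃.counit.app X))) := by
  have : R.jStar.PreservesEpimorphisms := Functor.preservesEpimorphisms_of_adjunction R.adj₄
  have : IsSplitEpi (R.jStar.map (R.adj₃.counit.app X)) :=
    IsSplitEpi.mk' ⟨_, R.adj₃.right_triangle_components X⟩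
  have hπ : R.jStar.map (cokernel.π (R.adj₃.counit.app X)) = 0 := by
    rw [← cancel_epi (R.jStar.map (R.adj₃.counit.app X)), ← Functor.map_comp, cokernel.condition,
      Functor.map_zero, comp_zero]
  have : Epi (R.jStar.map (cokernel.π (R.adj₃.counit.app X))) := R.jStar.map_epi _
  exact IsZero.of_epi_eq_zero _ hπ

lemma exact_counit_unit (X : 𝒞) :
    (ShortComplex.mk _ _ (R.counit_app_comp_unit_app X)).Exact := by
  obtain ⟨A', ⟨e⟩⟩ := (R.im_eq_ker _).mp (R.isZero_jStar_obj_cokernel_counit X)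
  set π := cokernel.π (R.adj₃.counit.app X)
  set φ := (R.adj₁.homEquiv _ _).symm (π ≫ e.inv)
  -- `π` factors through the unit, since its target lies in the essential image of `i_*`
  have hπ : R.adj₁.unit.app X ≫ R.iIns.map φ = π ≫ e.inv :=
    (R.adj₁.homEquiv_unit _ _ _).symm.trans (Equiv.apply_symm_apply _ _)
  rw [ShortComplex.exact_iff_mono_cokernel_desc]
  have : IsSplitMono (cokernel.desc _ (R.adj₁.unit.app X) (R.counit_app_comp_unit_app X)) :=
    IsSplitMono.mk' ⟨R.iIns.map φ ≫ e.hom, by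
      rw [← cancel_epi π, cokernel.π_desc_assoc, reassoc_of% hπ, Iso.inv_hom_id, Category.comp_id]⟩
  infer_instance

lemma isIso_jStar_map_g_of_isZero {S : ShortComplex 𝒞} (hS : S.ShortExact)
    (hX₁ : IsZero (R.jStar.obj S.X₁)) : IsIso (R.jStar.map S.g) :=
  have := R.adj₃.rightAdjoint_preservesLimits
  have := R.adj₄.leftAdjoint_preservesColimits
  (hS.map_of_exact R.jStar).isIso_g_iff.mpr hX₁

end Recollement

/-- If `0 → i_*(A) → M → N → 0` is a short exact sequence in `𝒞` and the counit
`ε_N : j_! j^*(N) → N` is a monomorphism, then applying `i^*` yields a short exact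
sequence `0 → i^* i_*(A) → i^*(M) → i^*(N) → 0` in `𝒜`. -/
theorem stmt_6 (R : Recollement 𝒜 𝒞 ℬ) (A₀ : 𝒜) {M N : 𝒞}
    (f : R.iIns.obj A₀ ⟶ M) (g : M ⟶ N) (h : IsSES f g)
    (hε : Mono (R.adj₃.counit.app N)) :
    IsSES (R.iStar.map f) (R.iStar.map g) := by
  obtain ⟨w, hS⟩ := h
  have := hS.mono_f
  have := hS.epi_g
  have := R.isIso_jStar_map_g_of_isZero hS (R.isZero_jStar_obj_iIns_obj A₀)
  have := R.jShriek.map_isIso (R.jStar.map g)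
  have : Mono (R.adj₃.counit.app M ≫ g) := by
    rw [← R.adj₃.counit_naturality g]
    infer_instance
  have : Mono (f ≫ R.adj₁.unit.app M) :=
    mono_comp_of_exact_of_mono_comp w _ (R.exact_counit_unit M)
  have := R.adj₁.leftAdjoint_preservesColimits
  exact ⟨by rw [← Functor.map_comp, w, Functor.map_zero],
    { exact := hS.exact.map_of_epi_of_preservesCokernel R.iStar hS.epi_g inferInstance
      mono_f := R.adj₁.mono_map_of_mono_comp_unit f
      epi_g := R.iStar.map_epi g }⟩
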